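/- Let 1 < α < 2 and λ > 0, and set e(r) = E_{α,1}(−λ r^α) for r ≥ 0. Then e is twice differentiable on (0, ∞), for every t > 0 the function r ↦ (t − r)^{1−α} e''(r) is integrable on (0, t), and (1/Γ(2−α)) ∫_0^t (t − r)^{1−α} e''(r) dr = −λ E_{α,1}(−λ t^α) for all t > 0. -/

import Mathlib

/-!
For `s > 0` we have `E_{α,1}(-λ s^α) = ∑ₖ (-λ)^k s^{αk} / Γ(αk+1)`, a power series in `s^α`
with infinite radius of convergence, so it can be differentiated termwise twice on `(0, ∞)`.
After the Gamma recursion `Γ(αk+1) = αk (αk-1) Γ(αk-1)` this gives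
`e''(r) = ∑_{k ≥ 1} (-λ)^k r^{αk-2} / Γ(αk-1)`. Each term is integrated against `(t-r)^{1-α}`
by the Beta integral `∫₀ᵗ r^{αk-2} (t-r)^{1-α} dr = Γ(αk-1) Γ(2-α) / Γ(α(k-1)+1) · t^{α(k-1)}`,
which turns the `k`-th term into `-λ Γ(2-α) (-λ t^α)^{k-1} / Γ(α(k-1)+1)`. The absolute values
of these term integrals are the terms of a convergent Mittag-Leffler series, which justifies
exchanging sum and integral, and summing gives `-λ Γ(2-α) E_{α,1}(-λ t^α)`.
-/

open MeasureTheory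

/-- The Mittag-Leffler function at a real argument,
`E_{α,μ}(x) = ∑_' k=0^∞ x^k / Γ(αk + μ)`. -/
noncomputable def mittagLefflerReal (α μ x : ℝ) : ℝ :=
  ∑' k : ℕ, x ^ k / Real.Gamma (α * k + μ)

open Filter Set Topology

theorem Real.rpow_le_max_of_mem_Icc {a b x : ℝ} (ha : 0 < a) (hx : x ∈ Icc a b) (p : ℝ) :
    x ^ p ≤ max (a ^ p) (b ^ p) := by
  rcases le_total 0 p with hp | hp
  · exact le_max_of_le_right (Real.rpow_le_rpow (ha.le.trans hx.1) hx.2 hp)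
  · exact le_max_of_le_left (Real.rpow_le_rpow_of_nonpos ha hx.1 hp)

theorem Real.rpow_mul_natCast_add {x : ℝ} (hx : 0 < x) (α β : ℝ) (k : ℕ) :
    x ^ (α * k + β) = (x ^ α) ^ k * x ^ β := by
  rw [Real.rpow_add hx, Real.rpow_mul hx.le, Real.rpow_natCast]

theorem MeasureTheory.integrable_tsum_of_summable_integral_norm {α E : Type*} [MeasurableSpace α]
    {μ : Measure α} [NormedAddCommGroup E] [CompleteSpace E] {F : ℕ → α → E}
    (hF_int : ∀ i, Integrable (F i) μ) (hF_sum : Summable fun i ↦ ∫ a, ‖F i a‖ ∂μ) :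
    Integrable (fun a ↦ ∑' i, F i a) μ := by
  have hlint : ∫⁻ a, ∑' i, ‖F i a‖ₑ ∂μ ≠ ⊤ := by
    rw [lintegral_tsum fun i ↦ (hF_int i).1.enorm]
    simp_rw [← ofReal_integral_norm_eq_lintegral_enorm (hF_int _)]
    rw [← ENNReal.ofReal_tsum_of_nonneg (fun i ↦ integral_nonneg fun a ↦ norm_nonneg _) hF_sum]
    exact ENNReal.ofReal_ne_top
  have hsum : ∀ᵐ a ∂μ, Summable fun i ↦ F i a := by
    filter_upwards [ae_lt_top' (AEMeasurable.tsum fun i ↦ (hF_int i).1.enorm) hlint]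
      with a ha
    exact .of_norm (ENNReal.tsum_coe_ne_top_iff_summable_coe.1 ha.ne)
  refine ⟨aestronglyMeasurable_of_tendsto_ae atTop
    (fun n ↦ Finset.aestronglyMeasurable_sum (Finset.range n) fun i _ ↦ (hF_int i).1)
    (hsum.mono fun a ha ↦ ?_), ?_⟩
  · simpa using ha.hasSum.tendsto_sum_nat
  · exact hlint.lt_top.trans_le' (lintegral_mono fun a ↦ enorm_tsum_le_tsum_enorm)

theorem Real.integral_rpow_mul_one_sub_rpow {a b : ℝ} (ha : -1 < a) (hb : -1 < b) :
    ∫ x in (0 : ℝ)..1, x ^ a * (1 - x) ^ b =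
      Real.Gamma (a + 1) * Real.Gamma (b + 1) / Real.Gamma (a + b + 2) := by
  have hbeta := Complex.Gamma_mul_Gamma_eq_betaIntegral (s := (a + 1 : ℝ)) (t := (b + 1 : ℝ))
    (by rw [Complex.ofReal_re]; linarith) (by rw [Complex.ofReal_re]; linarith)
  have hint : Complex.betaIntegral (a + 1 : ℝ) (b + 1 : ℝ) =
      ((∫ x in (0 : ℝ)..1, x ^ a * (1 - x) ^ b : ℝ) : ℂ) := by
    rw [Complex.betaIntegral, ← intervalIntegral.integral_ofReal]
    refine intervalIntegral.integral_congr fun x hx ↦ ?_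
    rw [uIcc_of_le zero_le_one] at hx
    simp only [Complex.ofReal_add, Complex.ofReal_one, add_sub_cancel_right, Complex.ofReal_mul]
    rw [Complex.ofReal_cpow hx.1, Complex.ofReal_cpow (sub_nonneg.2 hx.2), Complex.ofReal_sub,
      Complex.ofReal_one]
  rw [hint, ← Complex.ofReal_add, Complex.Gamma_ofReal, Complex.Gamma_ofReal,
    Complex.Gamma_ofReal, ← Complex.ofReal_mul, ← Complex.ofReal_mul, Complex.ofReal_inj] at hbeta
  rw [eq_div_iff (Real.Gamma_pos_of_pos (by linarith)).ne', hbeta,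
    show a + 1 + (b + 1) = a + b + 2 by ring, mul_comm]

theorem Real.integral_Ioo_rpow_mul_sub_rpow {a b t : ℝ} (ha : -1 < a) (hb : -1 < b)
    (ht : 0 < t) :
    ∫ r in Ioo 0 t, r ^ a * (t - r) ^ b =
      Real.Gamma (a + 1) * Real.Gamma (b + 1) / Real.Gamma (a + b + 2) * t ^ (a + b + 1) := by
  have hscale : ∫ x in (0 : ℝ)..1, (t * x) ^ a * (t - t * x) ^ b =
      t ^ a * t ^ b * ∫ x in (0 : ℝ)..1, x ^ a * (1 - x) ^ b := by
    rw [← intervalIntegral.integral_const_mul]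
    refine intervalIntegral.integral_congr fun x hx ↦ ?_
    rw [uIcc_of_le zero_le_one] at hx
    rw [Real.mul_rpow ht.le hx.1, show t - t * x = t * (1 - x) by ring,
      Real.mul_rpow ht.le (sub_nonneg.2 hx.2)]
    ring
  rw [intervalIntegral.integral_comp_mul_left (fun r ↦ r ^ a * (t - r) ^ b) ht.ne', mul_zero,
    mul_one, intervalIntegral.integral_of_le ht.le, integral_Ioc_eq_integral_Ioo,
    Real.integral_rpow_mul_one_sub_rpow ha hb, smul_eq_mul, inv_mul_eq_iff_eq_mul₀ ht.ne']
    at hscale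
  rw [hscale, Real.rpow_add ht, Real.rpow_add ht, Real.rpow_one]
  ring

theorem Real.integrableOn_Ioo_rpow_mul_sub_rpow {a b t : ℝ} (ha : -1 < a) (hb : -1 < b)
    (ht : 0 < t) : IntegrableOn (fun r ↦ r ^ a * (t - r) ^ b) (Ioo 0 t) := by
  -- a nonzero Bochner integral forces integrability
  refine Integrable.of_integral_ne_zero ?_
  rw [Real.integral_Ioo_rpow_mul_sub_rpow ha hb ht]
  have := Real.Gamma_pos_of_pos (by linarith : 0 < a + 1)
  have := Real.Gamma_pos_of_pos (by linarith : 0 < b + 1)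
  have := Real.Gamma_pos_of_pos (by linarith : 0 < a + b + 2)
  positivity

open Nat in
theorem Real.factorial_le_Gamma_mul_add_one {α : ℝ} (hα : 1 ≤ α) (k : ℕ) :
    (k ! : ℝ) ≤ Real.Gamma (α * k + 1) := by
  rw [← Real.Gamma_nat_eq_factorial]
  rcases k.eq_zero_or_pos with rfl | hk
  · simp
  have hk' : (1 : ℝ) ≤ k := by exact_mod_cast hk
  exact Real.Gamma_strictMonoOn_Ici.monotoneOn (mem_Ici.2 (by linarith))
    (mem_Ici.2 (by nlinarith)) (by nlinarith)

theorem Real.summable_norm_pow_div_Gamma_mul_add_one {α : ℝ} (hα : 1 ≤ α) (x : ℝ) :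
    Summable fun k : ℕ ↦ ‖x ^ k / Real.Gamma (α * k + 1)‖ := by
  refine .of_nonneg_of_le (fun k ↦ norm_nonneg _) (fun k ↦ ?_)
    (Real.summable_pow_div_factorial ‖x‖)
  rw [norm_div, norm_pow, Real.norm_of_nonneg (Real.Gamma_pos_of_pos (by positivity)).le]
  gcongr
  exact Real.factorial_le_Gamma_mul_add_one hα k

theorem summable_norm_mul_affine_mul_pow {d : ℕ → ℝ}
    (hd : ∀ y, 0 ≤ y → Summable fun k ↦ ‖d k‖ * y ^ k) (a b y : ℝ) (hy : 0 ≤ y) :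
    Summable fun k : ℕ ↦ ‖d k * (a * k + b)‖ * y ^ k := by
  refine .of_nonneg_of_le (fun k ↦ by positivity) (fun k ↦ ?_)
    ((hd (2 * y) (by positivity)).mul_left (|a| + |b|))
  have hk : (k : ℝ) + 1 ≤ 2 ^ k := by exact_mod_cast Nat.lt_two_pow_self
  have hab : ‖a * k + b‖ ≤ (|a| + |b|) * 2 ^ k := calc
    ‖a * k + b‖ ≤ |a| * k + |b| := by
      simpa [abs_mul] using abs_add_le (a * k) b
    _ ≤ (|a| + |b|) * (k + 1) := by nlinarith [abs_nonneg a, abs_nonneg b]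
    _ ≤ (|a| + |b|) * 2 ^ k := by gcongr
  calc ‖d k * (a * k + b)‖ * y ^ k = ‖d k‖ * ‖a * k + b‖ * y ^ k := by
        rw [norm_mul]
    _ ≤ ‖d k‖ * ((|a| + |b|) * 2 ^ k) * y ^ k := by gcongr
    _ = (|a| + |b|) * (‖d k‖ * (2 * y) ^ k) := by ring

/-- For `x > 0` this is `x ^ β * F (x ^ α)` with `F z = ∑ₖ d k * z ^ k`; the recurring hypothesis
`∀ y, 0 ≤ y → Summable fun k ↦ ‖d k‖ * y ^ k` says that `F` is entire. -/
noncomputable def rpowSeries (α β : ℝ) (d : ℕ → ℝ) (x : ℝ) : ℝ :=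
  ∑' k : ℕ, d k * x ^ (α * k + β)

namespace rpowSeries

variable {α β : ℝ} {d : ℕ → ℝ}

theorem summable (hd : ∀ y, 0 ≤ y → Summable fun k ↦ ‖d k‖ * y ^ k) {x : ℝ} (hx : 0 < x) :
    Summable fun k : ℕ ↦ d k * x ^ (α * k + β) := by
  refine .of_norm_bounded ((hd (x ^ α) (by positivity)).mul_right (x ^ β)) fun k ↦ ?_
  rw [norm_mul, Real.rpow_mul_natCast_add hx,
    Real.norm_of_nonneg (by positivity : 0 ≤ (x ^ α) ^ k * x ^ β)]
  exact (mul_assoc _ _ _).symm.le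

theorem hasDerivAt (hd : ∀ y, 0 ≤ y → Summable fun k ↦ ‖d k‖ * y ^ k) {x : ℝ} (hx : 0 < x) :
    HasDerivAt (rpowSeries α β d) (rpowSeries α (β - 1) (fun k ↦ d k * (α * k + β)) x) x := by
  set s := Ioo (x / 2) (x + 1)
  set K : ℝ → ℝ := fun p ↦ max ((x / 2) ^ p) ((x + 1) ^ p)
  have hK : ∀ y ∈ s, ∀ p, y ^ p ≤ K p := fun y hy p ↦
    Real.rpow_le_max_of_mem_Icc (by positivity) (Ioo_subset_Icc_self hy) p
  have hs : ∀ y ∈ s, 0 < y := fun y hy ↦ (half_pos hx).trans hy.1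
  have hxs : x ∈ s := ⟨by linarith, by linarith⟩
  refine hasDerivAt_tsum_of_isPreconnected (g := fun k z ↦ d k * z ^ (α * k + β))
    (g' := fun k z ↦ d k * (α * k + β) * z ^ (α * k + (β - 1)))
    (((summable_norm_mul_affine_mul_pow hd α β (K α) (by positivity))).mul_right (K (β - 1)))
    isOpen_Ioo isPreconnected_Ioo (fun k y hy ↦ ?_) (fun k y hy ↦ ?_)
    hxs (summable hd hx) hxs
  · refine ((Real.hasDerivAt_rpow_const (Or.inl (hs y hy).ne')).const_mul (d k)).congr_deriv ?_
    rw [add_sub_assoc, mul_assoc]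
  · have hy0 := hs y hy
    rw [norm_mul (d k * _), Real.rpow_mul_natCast_add hy0,
      Real.norm_of_nonneg (by positivity : 0 ≤ (y ^ α) ^ k * y ^ (β - 1))]
    calc ‖d k * (α * k + β)‖ * ((y ^ α) ^ k * y ^ (β - 1))
        ≤ ‖d k * (α * k + β)‖ * (K α ^ k * K (β - 1)) := by
          gcongr
          exacts [hK y hy α, hK y hy _]
      _ = _ := (mul_assoc _ _ _).symm

theorem hasDerivAt_of_eqOn (hd : ∀ y, 0 ≤ y → Summable fun k ↦ ‖d k‖ * y ^ k) {f : ℝ → ℝ}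
    (hf : EqOn f (rpowSeries α β d) (Ioi 0)) {x : ℝ} (hx : 0 < x) :
    HasDerivAt f (rpowSeries α (β - 1) (fun k ↦ d k * (α * k + β)) x) x :=
  (hasDerivAt hd hx).congr_of_eventuallyEq (hf.eventuallyEq_of_mem (Ioi_mem_nhds hx))

theorem eqOn_deriv (hd : ∀ y, 0 ≤ y → Summable fun k ↦ ‖d k‖ * y ^ k) {f : ℝ → ℝ}
    (hf : EqOn f (rpowSeries α β d) (Ioi 0)) :
    EqOn (deriv f) (rpowSeries α (β - 1) (fun k ↦ d k * (α * k + β))) (Ioi 0) :=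
  fun _ hx ↦ (hasDerivAt_of_eqOn hd hf hx).deriv

theorem eq_shift (hd0 : d 0 = 0) :
    rpowSeries α β d = rpowSeries α (β + α) (fun j ↦ d (j + 1)) := by
  ext x
  rw [rpowSeries, ← (add_left_injective 1).tsum_eq]
  · simp only [rpowSeries, Nat.cast_add, Nat.cast_one, mul_add, mul_one, add_right_comm _ α,
      add_assoc]
  · rintro (_ | j) hj
    · simp [hd0] at hj
    · exact ⟨j, rfl⟩

theorem hasSum_integral_sub_rpow_mul {b t : ℝ} (hα : 0 ≤ α) (hβ : -1 < β) (hb : -1 < b)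
    (ht : 0 < t)
    (hsum : Summable fun k : ℕ ↦ ‖d k * ∫ r in Ioo 0 t, r ^ (α * k + β) * (t - r) ^ b‖) :
    IntegrableOn (fun r ↦ (t - r) ^ b * rpowSeries α β d r) (Ioo 0 t) ∧
      HasSum (fun k : ℕ ↦ d k * ∫ r in Ioo 0 t, r ^ (α * k + β) * (t - r) ^ b)
        (∫ r in Ioo 0 t, (t - r) ^ b * rpowSeries α β d r) := by
  set G : ℕ → ℝ → ℝ := fun k r ↦ d k * (r ^ (α * k + β) * (t - r) ^ b)
  have hG_int : ∀ k, IntegrableOn (G k) (Ioo 0 t) := fun k ↦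
    (Real.integrableOn_Ioo_rpow_mul_sub_rpow (by nlinarith [k.cast_nonneg (α := ℝ)]) hb
      ht).const_mul (d k)
  have hG_norm : ∀ k, ∫ r in Ioo 0 t, ‖G k r‖ =
      ‖d k * ∫ r in Ioo 0 t, r ^ (α * k + β) * (t - r) ^ b‖ := by
    intro k
    have hnonneg : ∀ r ∈ Ioo 0 t, 0 ≤ r ^ (α * k + β) * (t - r) ^ b := fun r hr ↦
      mul_nonneg (Real.rpow_nonneg hr.1.le _) (Real.rpow_nonneg (sub_nonneg.2 hr.2.le) _)
    rw [norm_mul, Real.norm_of_nonneg (setIntegral_nonneg measurableSet_Ioo hnonneg),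
      ← integral_const_mul]
    refine setIntegral_congr_fun measurableSet_Ioo fun r hr ↦ ?_
    simp only [G, norm_mul, Real.norm_of_nonneg (hnonneg r hr)]
  have hG_sum : (fun r ↦ ∑' k, G k r) = fun r ↦ (t - r) ^ b * rpowSeries α β d r := by
    ext r
    simp only [G, rpowSeries, ← tsum_mul_left]
    congr 1 with k
    ring
  have hG_norm_sum := hsum.congr fun k ↦ (hG_norm k).symm
  rw [← hG_sum]
  refine ⟨integrable_tsum_of_summable_integral_norm hG_int hG_norm_sum, ?_⟩
  simpa only [G, integral_const_mul] using
    hasSum_integral_of_summable_integral_norm hG_int hG_norm_sum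

end rpowSeries

section MittagLeffler

variable {α : ℝ} (lam : ℝ)

theorem eqOn_mittagLefflerReal_neg_mul_rpow :
    EqOn (fun s ↦ mittagLefflerReal α 1 (-(lam * s ^ α)))
      (rpowSeries α 0 fun k ↦ (-lam) ^ k / Real.Gamma (α * k + 1)) (Ioi 0) := by
  intro s hs
  refine tsum_congr fun k ↦ ?_
  rw [Real.rpow_mul_natCast_add hs, Real.rpow_zero, mul_one, neg_mul_eq_neg_mul, mul_pow]
  ring

theorem summable_norm_mittagLeffler_coeff_mul_pow (hα : 1 ≤ α) (y : ℝ) (hy : 0 ≤ y) :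
    Summable fun k : ℕ ↦ ‖(-lam) ^ k / Real.Gamma (α * k + 1)‖ * y ^ k := by
  refine (Real.summable_norm_pow_div_Gamma_mul_add_one hα (-lam * y)).congr fun k ↦ ?_
  rw [mul_pow, mul_div_right_comm, norm_mul, norm_pow y, Real.norm_of_nonneg hy]

theorem eqOn_deriv_deriv_mittagLefflerReal_neg_mul_rpow (hα : 1 < α) :
    EqOn (deriv (deriv fun s ↦ mittagLefflerReal α 1 (-(lam * s ^ α))))
      (rpowSeries α (α - 2) fun j ↦ (-lam) ^ (j + 1) / Real.Gamma (α * j + (α - 1))) (Ioi 0) := by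
  have hc := summable_norm_mittagLeffler_coeff_mul_pow lam hα.le
  have he' := rpowSeries.eqOn_deriv hc (eqOn_mittagLefflerReal_neg_mul_rpow lam)
  have he'' := rpowSeries.eqOn_deriv (summable_norm_mul_affine_mul_pow hc α 0) he'
  rw [rpowSeries.eq_shift (by simp)] at he''
  convert he'' using 2
  · ring
  ext j
  set s := α * j + (α - 1)
  have hs : 0 < s := by have := j.cast_nonneg (α := ℝ); nlinarith
  have hΓ : Real.Gamma (α * (j + 1 : ℕ) + 1) = (s + 1) * s * Real.Gamma s := by
    rw [show α * (j + 1 : ℕ) + 1 = s + 1 + 1 by push_cast; ring,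
      Real.Gamma_add_one (by positivity), Real.Gamma_add_one hs.ne', mul_assoc]
  rw [hΓ, show α * (j + 1 : ℕ) + 0 = s + 1 by push_cast; ring,
    show α * (j + 1 : ℕ) + (0 - 1) = s by push_cast; ring]
  field_simp

theorem mittagLeffler_coeff_mul_integral (h1 : 1 < α) (h2 : α < 2) {t : ℝ} (ht : 0 < t) (j : ℕ) :
    (-lam) ^ (j + 1) / Real.Gamma (α * j + (α - 1)) *
        ∫ r in Ioo 0 t, r ^ (α * j + (α - 2)) * (t - r) ^ (1 - α) =
      -lam * Real.Gamma (2 - α) * ((-(lam * t ^ α)) ^ j / Real.Gamma (α * j + 1)) := by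
  have hj := j.cast_nonneg (α := ℝ)
  rw [Real.integral_Ioo_rpow_mul_sub_rpow (by nlinarith) (by linarith) ht,
    show α * j + (α - 2) + 1 = α * j + (α - 1) by ring, show 1 - α + 1 = 2 - α by ring,
    show α * j + (α - 2) + (1 - α) + 2 = α * j + 1 by ring,
    show α * j + (α - 2) + (1 - α) + 1 = α * j + 0 by ring, Real.rpow_mul_natCast_add ht,
    Real.rpow_zero]
  have := Real.Gamma_pos_of_pos (by nlinarith : 0 < α * j + (α - 1))
  field_simp
  ring

end MittagLeffler

theorem caputo_wave_mittagLeffler_general (α lam : ℝ) (h1 : 1 < α) (h2 : α < 2) :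
    (∀ r : ℝ, 0 < r →
        DifferentiableAt ℝ (fun s : ℝ => mittagLefflerReal α 1 (-(lam * s ^ α))) r ∧
        DifferentiableAt ℝ
          (deriv (fun s : ℝ => mittagLefflerReal α 1 (-(lam * s ^ α)))) r) ∧
    ∀ t : ℝ, 0 < t →
      IntegrableOn
        (fun r : ℝ => (t - r) ^ (1 - α) *
          deriv (deriv (fun s : ℝ => mittagLefflerReal α 1 (-(lam * s ^ α)))) r)
        (Set.Ioo 0 t) ∧
      (1 / Real.Gamma (2 - α)) *
          (∫ r in Set.Ioo 0 t, (t - r) ^ (1 - α) *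
            deriv (deriv (fun s : ℝ => mittagLefflerReal α 1 (-(lam * s ^ α)))) r)
        = -(lam * mittagLefflerReal α 1 (-(lam * t ^ α))) := by
  set e := fun s : ℝ ↦ mittagLefflerReal α 1 (-(lam * s ^ α))
  have hc := summable_norm_mittagLeffler_coeff_mul_pow lam h1.le
  have he := eqOn_mittagLefflerReal_neg_mul_rpow (α := α) lam
  have he' := rpowSeries.eqOn_deriv hc he
  refine ⟨fun r hr ↦ ⟨(rpowSeries.hasDerivAt_of_eqOn hc he hr).differentiableAt,
    (rpowSeries.hasDerivAt_of_eqOn (summable_norm_mul_affine_mul_pow hc α 0) he'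
      hr).differentiableAt⟩, fun t ht ↦ ?_⟩
  set d := fun j : ℕ ↦ (-lam) ^ (j + 1) / Real.Gamma (α * j + (α - 1))
  have hterm := mittagLeffler_coeff_mul_integral lam h1 h2 ht
  obtain ⟨hint, hsum⟩ := rpowSeries.hasSum_integral_sub_rpow_mul (α := α) (β := α - 2)
    (b := 1 - α) (d := d) (by linarith) (by linarith) (by linarith) ht (by
      simp_rw [d, hterm, norm_mul (-lam * _)]
      exact (Real.summable_norm_pow_div_Gamma_mul_add_one h1.le _).mul_left _)
  have he'' : EqOn (fun r ↦ (t - r) ^ (1 - α) * deriv (deriv e) r)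
      (fun r ↦ (t - r) ^ (1 - α) * rpowSeries α (α - 2) d r) (Ioo 0 t) := fun r hr ↦
    congrArg _ (eqOn_deriv_deriv_mittagLefflerReal_neg_mul_rpow lam h1 hr.1)
  rw [integrableOn_congr_fun he'' measurableSet_Ioo,
    setIntegral_congr_fun measurableSet_Ioo he'']
  simp_rw [d, hterm] at hsum
  refine ⟨hint, ?_⟩
  rw [← hsum.tsum_eq, tsum_mul_left, mittagLefflerReal]
  have := Real.Gamma_pos_of_pos (by linarith : 0 < 2 - α)
  field_simp

/-- Let `1 < α < 2` and `λ > 0`, and set `e(r) = E_{α,1}(−λ r^α)`. Then `e` is twice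
differentiable on `(0,∞)`, for every `t > 0` the function `r ↦ (t−r)^{1−α} e''(r)` is
integrable on `(0,t)`, and `(1/Γ(2−α)) ∫_0^t (t−r)^{1−α} e''(r) dr = −λ E_{α,1}(−λ t^α)`
for all `t > 0`. -/
theorem caputo_wave_mittagLeffler (α lam : ℝ) (h1 : 1 < α) (h2 : α < 2) (hlam : 0 < lam) :
    (∀ r : ℝ, 0 < r →
        DifferentiableAt ℝ (fun s : ℝ => mittagLefflerReal α 1 (-(lam * s ^ α))) r ∧
        DifferentiableAt ℝ
          (deriv (fun s : ℝ => mittagLefflerReal α 1 (-(lam * s ^ α)))) r) ∧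
    ∀ t : ℝ, 0 < t →
      IntegrableOn
        (fun r : ℝ => (t - r) ^ (1 - α) *
          deriv (deriv (fun s : ℝ => mittagLefflerReal α 1 (-(lam * s ^ α)))) r)
        (Set.Ioo 0 t) ∧
      (1 / Real.Gamma (2 - α)) *
          (∫ r in Set.Ioo 0 t, (t - r) ^ (1 - α) *
            deriv (deriv (fun s : ℝ => mittagLefflerReal α 1 (-(lam * s ^ α)))) r)
        = -(lam * mittagLefflerReal α 1 (-(lam * t ^ α))) :=
  caputo_wave_mittagLeffler_general α lam h1 h2
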